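/- arXiv:1703.05688 — 3 statements merged into one kernel-verified Lean document; each statement's English description precedes it below -/
import Mathlib

section
/- For all multi-indices α, β ∈ ℕ^n, the function f_{α,β} = b^α (z^β exp(−(π/2) Σ_{i=1}^n |z_i|²)) on ℂ^n is an eigenfunction of the model operator 𝓛 = Σ_{j=1}^n b_j b_j^+ with eigenvalue 4π Σ_{i=1}^n α_i, i.e. 𝓛 f_{α,β} = 4π (α_1 + ⋯ + α_n) f_{α,β}. -/
open MeasureTheory Complex

noncomputable section

/-- The Wirtinger derivative `∂/∂z_j` of a function on `ℂⁿ ≅ ℝ^{2n}`. -/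
def wirtingerD {n : ℕ} (j : Fin n) (f : (Fin n → ℂ) → ℂ) (z : Fin n → ℂ) : ℂ :=
  (1 / 2) * (fderiv ℝ f z (Pi.single j 1) - Complex.I * fderiv ℝ f z (Pi.single j Complex.I))

/-- The Wirtinger derivative `∂/∂z̄_j` of a function on `ℂⁿ ≅ ℝ^{2n}`. -/
def wirtingerDBar {n : ℕ} (j : Fin n) (f : (Fin n → ℂ) → ℂ) (z : Fin n → ℂ) : ℂ :=
  (1 / 2) * (fderiv ℝ f z (Pi.single j 1) + Complex.I * fderiv ℝ f z (Pi.single j Complex.I))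

/-- The creation operator `b_j = -2 ∂/∂z_j + π z̄_j`. -/
def bOp {n : ℕ} (j : Fin n) (f : (Fin n → ℂ) → ℂ) : (Fin n → ℂ) → ℂ :=
  fun z => -2 * wirtingerD j f z + (Real.pi : ℂ) * (starRingEnd ℂ) (z j) * f z

/-- The annihilation operator `b_j⁺ = 2 ∂/∂z̄_j + π z_j`. -/
def bPlusOp {n : ℕ} (j : Fin n) (f : (Fin n → ℂ) → ℂ) : (Fin n → ℂ) → ℂ :=
  fun z => 2 * wirtingerDBar j f z + (Real.pi : ℂ) * z j * f z

/-- The Gaussian `exp(-(π/2) Σ |z_i|²)`. -/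
def gaussFn {n : ℕ} (z : Fin n → ℂ) : ℂ :=
  Complex.exp (-((Real.pi : ℂ) / 2) * ∑ i, (Complex.normSq (z i) : ℂ))

/-- The iterated operator `b^α = b_1^{α_1} ∘ ⋯ ∘ b_n^{α_n}`. -/
def bPow {n : ℕ} (α : Fin n → ℕ) (f : (Fin n → ℂ) → ℂ) : (Fin n → ℂ) → ℂ :=
  (List.ofFn (fun j : Fin n => (bOp j)^[α j])).foldr (· ∘ ·) id f

/-- The eigenfunctions `f_{α,β} = b^α (z^β exp(-(π/2) Σ |z_i|²))` of the model operator. -/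
def eigFun {n : ℕ} (α β : Fin n → ℕ) : (Fin n → ℂ) → ℂ :=
  bPow α (fun z => (∏ j, z j ^ β j) * gaussFn z)

/-- The model Bergman kernel `𝒫(z,w) = exp(-(π/2) Σ (|z_j|² + |w_j|² - 2 z_j w̄_j))`. -/
def bergK {n : ℕ} (z w : Fin n → ℂ) : ℂ :=
  Complex.exp (-((Real.pi : ℂ) / 2) *
    ∑ j, ((Complex.normSq (z j) : ℂ) + (Complex.normSq (w j) : ℂ)
            - 2 * z j * (starRingEnd ℂ) (w j)))

/-- `F : ℂⁿ × ℂⁿ → ℂ` is a polynomial function in the underlying real coordinates, equivalently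
a polynomial in the coordinates `z_i, z̄_i` of the first argument and `z'_i, z̄'_i` of the
second one. -/
def IsPolyKernel {n : ℕ} (F : (Fin n → ℂ) → (Fin n → ℂ) → ℂ) : Prop :=
  ∃ p : MvPolynomial (Fin n ⊕ Fin n ⊕ Fin n ⊕ Fin n) ℂ,
    ∀ z z' : Fin n → ℂ,
      F z z' = MvPolynomial.eval
        (Sum.elim (fun i => z i) (Sum.elim (fun i => (starRingEnd ℂ) (z i))
          (Sum.elim (fun i => z' i) (fun i => (starRingEnd ℂ) (z' i))))) p

/-- Under the identification `ℝ^{2n} ≅ ℂⁿ`, `z_j = Z_{2j-1} + i Z_{2j}`, the direction in `ℂⁿ`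
corresponding to the `j`-th real coordinate `Z_j`. -/
def coordDir {n : ℕ} (j : Fin (2 * n)) : Fin n → ℂ :=
  Pi.single ⟨j.val / 2, by have := j.isLt; omega⟩ (if j.val % 2 = 0 then 1 else Complex.I)

/-- The `j`-th real coordinate of `w ∈ ℂⁿ ≅ ℝ^{2n}`, viewed as a complex number. -/
def realCoordC {n : ℕ} (j : Fin (2 * n)) (w : Fin n → ℂ) : ℂ :=
  if j.val % 2 = 0 then ((w ⟨j.val / 2, by have := j.isLt; omega⟩).re : ℂ)
  else ((w ⟨j.val / 2, by have := j.isLt; omega⟩).im : ℂ)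

/-- The partial derivative `∂/∂Z_j` in the `j`-th real coordinate of `ℂⁿ ≅ ℝ^{2n}`. -/
def realPDeriv {n : ℕ} (j : Fin (2 * n)) (f : (Fin n → ℂ) → ℂ) (z : Fin n → ℂ) : ℂ :=
  fderiv ℝ f z (coordDir j)

/-- The iterated partial derivative `∂^α` in the real coordinates of `ℂⁿ ≅ ℝ^{2n}`,
for a multi-index `α ∈ ℕ^{2n}`. -/
def iterD {n : ℕ} (α : Fin (2 * n) → ℕ) (f : (Fin n → ℂ) → ℂ) : (Fin n → ℂ) → ℂ :=
  (List.ofFn (fun j : Fin (2 * n) =>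
    (fun (g : (Fin n → ℂ) → ℂ) (z : Fin n → ℂ) => fderiv ℝ g z (coordDir j))^[α j])).foldr
    (· ∘ ·) id f

/-! The operators `b_j`, `b_j⁺` preserve smooth functions and satisfy the canonical commutation
relations `[b_j, b_k] = 0` and `[b_j⁺, b_k] = 4π δ_{jk}`: Wirtinger derivatives commute on smooth
functions (Schwarz) and `∂_j z_k = ∂̄_j z̄_k = δ_{jk}`, `∂_j z̄_k = 0`. Hence `𝓛 b_k = b_k 𝓛 + 4π b_k`,
so every `b_k` raises an eigenvalue of `𝓛` by `4π`. The ground state `z^β exp(-(π/2)|z|²)` lies in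
the kernel of every `b_j⁺`, since `b_j⁺ (h exp(-(π/2)|z|²)) = 2 (∂̄_j h) exp(-(π/2)|z|²)` and `z^β`
is holomorphic; so it is an eigenfunction for the eigenvalue `0`, and `b^α` of it one for `4π Σ α_i`.
-/

open Real
open scoped ContDiff ComplexConjugate

@[fun_prop]
theorem Complex.contDiff_conj {m : WithTop ℕ∞} : ContDiff ℝ m (conj : ℂ → ℂ) :=
  conjCLE.contDiff

section DirectionalDerivative

variable {E : Type*} [NormedAddCommGroup E] [NormedSpace ℝ E] {f g : E → ℂ} {v w z : E}

def dirDeriv (v : E) (f : E → ℂ) (z : E) : ℂ :=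
  fderiv ℝ f z v

theorem ContDiff.dirDeriv (hf : ContDiff ℝ ∞ f) (v : E) : ContDiff ℝ ∞ (dirDeriv v f) :=
  (hf.fderiv_right le_rfl).clm_apply contDiff_const

theorem dirDeriv_add (hf : DifferentiableAt ℝ f z) (hg : DifferentiableAt ℝ g z) :
    dirDeriv v (fun y => f y + g y) z = dirDeriv v f z + dirDeriv v g z := by
  simp [dirDeriv, fderiv_fun_add hf hg]

theorem dirDeriv_sub (hf : DifferentiableAt ℝ f z) (hg : DifferentiableAt ℝ g z) :
    dirDeriv v (fun y => f y - g y) z = dirDeriv v f z - dirDeriv v g z := by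
  simp [dirDeriv, fderiv_fun_sub hf hg]

theorem dirDeriv_const_mul (c : ℂ) (hf : DifferentiableAt ℝ f z) :
    dirDeriv v (fun y => c * f y) z = c * dirDeriv v f z := by
  simp [dirDeriv, fderiv_const_mul hf]

theorem dirDeriv_mul (hf : DifferentiableAt ℝ f z) (hg : DifferentiableAt ℝ g z) :
    dirDeriv v (fun y => f y * g y) z = dirDeriv v f z * g z + f z * dirDeriv v g z := by
  simp only [dirDeriv, fderiv_fun_mul hf hg, add_apply, smul_apply, smul_eq_mul]
  ring

theorem dirDeriv_sum {ι : Type*} (s : Finset ι) {F : ι → E → ℂ}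
    (hF : ∀ i ∈ s, DifferentiableAt ℝ (F i) z) :
    dirDeriv v (fun y => ∑ i ∈ s, F i y) z = ∑ i ∈ s, dirDeriv v (F i) z := by
  simp [dirDeriv, fderiv_fun_sum hF]

theorem dirDeriv_cexp {φ : E → ℂ} (hφ : DifferentiableAt ℝ φ z) :
    dirDeriv v (fun y => cexp (φ y)) z = cexp (φ z) * dirDeriv v φ z := by
  simp [dirDeriv, (hφ.hasFDerivAt.cexp).fderiv]

theorem ContinuousLinearMap.dirDeriv_eq (L : E →L[ℝ] ℂ) : dirDeriv v L z = L v := by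
  simp [dirDeriv]

theorem dirDeriv_comm (hf : ContDiff ℝ 2 f) :
    dirDeriv v (dirDeriv w f) z = dirDeriv w (dirDeriv v f) z := by
  have hDf : DifferentiableAt ℝ (fderiv ℝ f) z :=
    (hf.fderiv_right (m := 1) le_rfl).differentiable one_ne_zero z
  have hsymm := (hf.contDiffAt (x := z)).isSymmSndFDerivAt (by simp) v w
  change fderiv ℝ (fun y => fderiv ℝ f y w) z v = fderiv ℝ (fun y => fderiv ℝ f y v) z w
  simp only [fderiv_clm_apply hDf (differentiableAt_const _)]
  simpa using hsymm

theorem dirDeriv_smul_of_differentiableAt [NormedSpace ℂ E] [IsScalarTower ℝ ℂ E]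
    (hf : DifferentiableAt ℂ f z) (c : ℂ) : dirDeriv (c • v) f z = c * dirDeriv v f z := by
  simp [dirDeriv, hf.fderiv_restrictScalars ℝ]

end DirectionalDerivative

section Wirtinger

variable {n : ℕ} {f g : (Fin n → ℂ) → ℂ} {v z : Fin n → ℂ}

theorem dirDeriv_coord (k : Fin n) : dirDeriv v (fun y => y k) z = v k :=
  (ContinuousLinearMap.proj k : (Fin n → ℂ) →L[ℝ] ℂ).dirDeriv_eq

theorem dirDeriv_conj_coord (k : Fin n) :
    dirDeriv v (fun y => conj (y k)) z = conj (v k) :=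
  (conjCLE.toContinuousLinearMap.comp
    (ContinuousLinearMap.proj k : (Fin n → ℂ) →L[ℝ] ℂ)).dirDeriv_eq

theorem wirtingerD_eq_dirDeriv (j : Fin n) (f : (Fin n → ℂ) → ℂ) (z : Fin n → ℂ) :
    wirtingerD j f z = 1 / 2 * (dirDeriv (Pi.single j 1) f z - I * dirDeriv (Pi.single j I) f z) :=
  rfl

theorem wirtingerDBar_eq_dirDeriv (j : Fin n) (f : (Fin n → ℂ) → ℂ) (z : Fin n → ℂ) :
    wirtingerDBar j f z =
      1 / 2 * (dirDeriv (Pi.single j 1) f z + I * dirDeriv (Pi.single j I) f z) :=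
  rfl

theorem ContDiff.wirtingerD (hf : ContDiff ℝ ∞ f) (j : Fin n) : ContDiff ℝ ∞ (wirtingerD j f) :=
  contDiff_const.mul ((hf.dirDeriv _).sub (contDiff_const.mul (hf.dirDeriv _)))

theorem ContDiff.wirtingerDBar (hf : ContDiff ℝ ∞ f) (j : Fin n) :
    ContDiff ℝ ∞ (wirtingerDBar j f) :=
  contDiff_const.mul ((hf.dirDeriv _).add (contDiff_const.mul (hf.dirDeriv _)))

variable (j : Fin n)

theorem wirtingerD_add (hf : DifferentiableAt ℝ f z) (hg : DifferentiableAt ℝ g z) :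
    wirtingerD j (fun y => f y + g y) z = wirtingerD j f z + wirtingerD j g z := by
  simp only [wirtingerD_eq_dirDeriv, dirDeriv_add hf hg]
  ring

theorem wirtingerDBar_add (hf : DifferentiableAt ℝ f z) (hg : DifferentiableAt ℝ g z) :
    wirtingerDBar j (fun y => f y + g y) z = wirtingerDBar j f z + wirtingerDBar j g z := by
  simp only [wirtingerDBar_eq_dirDeriv, dirDeriv_add hf hg]
  ring

theorem wirtingerD_const_mul (c : ℂ) (hf : DifferentiableAt ℝ f z) :
    wirtingerD j (fun y => c * f y) z = c * wirtingerD j f z := by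
  simp only [wirtingerD_eq_dirDeriv, dirDeriv_const_mul c hf]
  ring

theorem wirtingerDBar_const_mul (c : ℂ) (hf : DifferentiableAt ℝ f z) :
    wirtingerDBar j (fun y => c * f y) z = c * wirtingerDBar j f z := by
  simp only [wirtingerDBar_eq_dirDeriv, dirDeriv_const_mul c hf]
  ring

theorem wirtingerD_mul (hf : DifferentiableAt ℝ f z) (hg : DifferentiableAt ℝ g z) :
    wirtingerD j (fun y => f y * g y) z = wirtingerD j f z * g z + f z * wirtingerD j g z := by
  simp only [wirtingerD_eq_dirDeriv, dirDeriv_mul hf hg]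
  ring

theorem wirtingerDBar_mul (hf : DifferentiableAt ℝ f z) (hg : DifferentiableAt ℝ g z) :
    wirtingerDBar j (fun y => f y * g y) z =
      wirtingerDBar j f z * g z + f z * wirtingerDBar j g z := by
  simp only [wirtingerDBar_eq_dirDeriv, dirDeriv_mul hf hg]
  ring

theorem wirtingerD_coord (k : Fin n) :
    wirtingerD j (fun y => y k) z = if j = k then 1 else 0 := by
  rcases eq_or_ne j k with rfl | hjk
  · norm_num [wirtingerD_eq_dirDeriv, dirDeriv_coord]
  · simp [wirtingerD_eq_dirDeriv, dirDeriv_coord, hjk, hjk.symm]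

theorem wirtingerD_conj_coord (k : Fin n) : wirtingerD j (fun y => conj (y k)) z = 0 := by
  rcases eq_or_ne j k with rfl | hjk
  · simp [wirtingerD_eq_dirDeriv, dirDeriv_conj_coord]
  · simp [wirtingerD_eq_dirDeriv, dirDeriv_conj_coord, hjk.symm]

theorem wirtingerDBar_conj_coord (k : Fin n) :
    wirtingerDBar j (fun y => conj (y k)) z = if j = k then 1 else 0 := by
  rcases eq_or_ne j k with rfl | hjk
  · norm_num [wirtingerDBar_eq_dirDeriv, dirDeriv_conj_coord]
  · simp [wirtingerDBar_eq_dirDeriv, dirDeriv_conj_coord, hjk, hjk.symm]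

theorem wirtingerDBar_eq_zero_of_differentiableAt (hf : DifferentiableAt ℂ f z) :
    wirtingerDBar j f z = 0 := by
  have hI : (Pi.single j I : Fin n → ℂ) = I • Pi.single j 1 := by simp [← Pi.single_smul]
  rw [wirtingerDBar_eq_dirDeriv, hI, dirDeriv_smul_of_differentiableAt hf]
  linear_combination (1 / 2 * dirDeriv (Pi.single j 1) f z) * I_mul_I

theorem dirDeriv_wirtingerD (hf : ContDiff ℝ ∞ f) (k : Fin n) :
    dirDeriv v (wirtingerD k f) z = wirtingerD k (dirDeriv v f) z := by
  have hd : ∀ w, Differentiable ℝ (dirDeriv w f) := fun w =>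
    (hf.dirDeriv w).differentiable (by simp)
  change dirDeriv v (fun y => 1 / 2 * (dirDeriv _ f y - I * dirDeriv _ f y)) z = _
  rw [dirDeriv_const_mul _ (by fun_prop), dirDeriv_sub (by fun_prop) (by fun_prop),
    dirDeriv_const_mul _ (by fun_prop), wirtingerD_eq_dirDeriv,
    dirDeriv_comm (hf.of_le ENat.LEInfty.out) (v := Pi.single k 1),
    dirDeriv_comm (hf.of_le ENat.LEInfty.out) (v := Pi.single k I)]

theorem dirDeriv_wirtingerDBar (hf : ContDiff ℝ ∞ f) (k : Fin n) :
    dirDeriv v (wirtingerDBar k f) z = wirtingerDBar k (dirDeriv v f) z := by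
  have hd : ∀ w, Differentiable ℝ (dirDeriv w f) := fun w =>
    (hf.dirDeriv w).differentiable (by simp)
  change dirDeriv v (fun y => 1 / 2 * (dirDeriv _ f y + I * dirDeriv _ f y)) z = _
  rw [dirDeriv_const_mul _ (by fun_prop), dirDeriv_add (by fun_prop) (by fun_prop),
    dirDeriv_const_mul _ (by fun_prop), wirtingerDBar_eq_dirDeriv,
    dirDeriv_comm (hf.of_le ENat.LEInfty.out) (v := Pi.single k 1),
    dirDeriv_comm (hf.of_le ENat.LEInfty.out) (v := Pi.single k I)]

theorem wirtingerD_comm (hf : ContDiff ℝ ∞ f) (k : Fin n) :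
    wirtingerD j (wirtingerD k f) z = wirtingerD k (wirtingerD j f) z := by
  have h2 : ContDiff ℝ 2 f := hf.of_le ENat.LEInfty.out
  rw [wirtingerD_eq_dirDeriv j, wirtingerD_eq_dirDeriv k, dirDeriv_wirtingerD hf,
    dirDeriv_wirtingerD hf, dirDeriv_wirtingerD hf, dirDeriv_wirtingerD hf]
  simp only [wirtingerD_eq_dirDeriv]
  rw [dirDeriv_comm h2 (v := Pi.single j 1) (w := Pi.single k 1),
    dirDeriv_comm h2 (v := Pi.single j 1) (w := Pi.single k I),
    dirDeriv_comm h2 (v := Pi.single j I) (w := Pi.single k 1),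
    dirDeriv_comm h2 (v := Pi.single j I) (w := Pi.single k I)]
  ring

theorem wirtingerD_wirtingerDBar_comm (hf : ContDiff ℝ ∞ f) (k : Fin n) :
    wirtingerD j (wirtingerDBar k f) z = wirtingerDBar k (wirtingerD j f) z := by
  have h2 : ContDiff ℝ 2 f := hf.of_le ENat.LEInfty.out
  rw [wirtingerD_eq_dirDeriv j, wirtingerDBar_eq_dirDeriv k, dirDeriv_wirtingerD hf,
    dirDeriv_wirtingerD hf, dirDeriv_wirtingerDBar hf, dirDeriv_wirtingerDBar hf]
  simp only [wirtingerD_eq_dirDeriv, wirtingerDBar_eq_dirDeriv]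
  rw [dirDeriv_comm h2 (v := Pi.single j 1) (w := Pi.single k 1),
    dirDeriv_comm h2 (v := Pi.single j 1) (w := Pi.single k I),
    dirDeriv_comm h2 (v := Pi.single j I) (w := Pi.single k 1),
    dirDeriv_comm h2 (v := Pi.single j I) (w := Pi.single k I)]
  ring

end Wirtinger

section Operators

variable {n : ℕ} {f g : (Fin n → ℂ) → ℂ}

theorem ContDiff.bOp (hf : ContDiff ℝ ∞ f) (j : Fin n) : ContDiff ℝ ∞ (bOp j f) := by
  have := hf.wirtingerD j
  unfold _root_.bOp
  fun_prop

theorem ContDiff.bPlusOp (hf : ContDiff ℝ ∞ f) (j : Fin n) : ContDiff ℝ ∞ (bPlusOp j f) := by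
  have := hf.wirtingerDBar j
  unfold _root_.bPlusOp
  fun_prop

theorem bOp_add (hf : Differentiable ℝ f) (hg : Differentiable ℝ g) (j : Fin n) :
    bOp j (f + g) = bOp j f + bOp j g := by
  funext z
  simp only [bOp, Pi.add_apply]
  rw [show f + g = fun y => f y + g y from rfl, wirtingerD_add j (hf z) (hg z)]
  ring

theorem bOp_smul (c : ℂ) (hf : Differentiable ℝ f) (j : Fin n) :
    bOp j (c • f) = c • bOp j f := by
  funext z
  simp only [bOp, Pi.smul_apply, smul_eq_mul]
  rw [show c • f = fun y => c * f y from rfl, wirtingerD_const_mul j c (hf z)]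
  ring

theorem bPlusOp_add (hf : Differentiable ℝ f) (hg : Differentiable ℝ g) (j : Fin n) :
    bPlusOp j (f + g) = bPlusOp j f + bPlusOp j g := by
  funext z
  simp only [bPlusOp, Pi.add_apply]
  rw [show f + g = fun y => f y + g y from rfl, wirtingerDBar_add j (hf z) (hg z)]
  ring

theorem bPlusOp_smul (c : ℂ) (hf : Differentiable ℝ f) (j : Fin n) :
    bPlusOp j (c • f) = c • bPlusOp j f := by
  funext z
  simp only [bPlusOp, Pi.smul_apply, smul_eq_mul]
  rw [show c • f = fun y => c * f y from rfl, wirtingerDBar_const_mul j c (hf z)]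
  ring

theorem bOp_bOp_comm (hf : ContDiff ℝ ∞ f) (j k : Fin n) : bOp j (bOp k f) = bOp k (bOp j f) := by
  have hd : Differentiable ℝ f := hf.differentiable (by simp)
  have hdj : Differentiable ℝ (wirtingerD j f) := (hf.wirtingerD j).differentiable (by simp)
  have hdk : Differentiable ℝ (wirtingerD k f) := (hf.wirtingerD k).differentiable (by simp)
  funext z
  unfold bOp
  simp (disch := fun_prop) only [wirtingerD_add, wirtingerD_const_mul, wirtingerD_mul,
    wirtingerD_conj_coord, wirtingerD_comm j hf k]
  ring

theorem bPlusOp_bOp (hf : ContDiff ℝ ∞ f) (j k : Fin n) (z : Fin n → ℂ) :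
    bPlusOp j (bOp k f) z = bOp k (bPlusOp j f) z + (if j = k then 4 * (π : ℂ) else 0) * f z := by
  have hd : Differentiable ℝ f := hf.differentiable (by simp)
  have hdj : Differentiable ℝ (wirtingerDBar j f) := (hf.wirtingerDBar j).differentiable (by simp)
  have hdk : Differentiable ℝ (wirtingerD k f) := (hf.wirtingerD k).differentiable (by simp)
  unfold bOp bPlusOp
  simp (disch := fun_prop) only [wirtingerD_add, wirtingerD_const_mul, wirtingerD_mul,
    wirtingerDBar_add, wirtingerDBar_const_mul, wirtingerDBar_mul, wirtingerD_coord,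
    wirtingerDBar_conj_coord, wirtingerD_wirtingerDBar_comm k hf j]
  rcases eq_or_ne j k with rfl | hjk
  · simp only [if_true]
    ring
  · simp only [hjk, hjk.symm, if_false]
    ring

end Operators

section GroundState

variable {n : ℕ}

theorem gaussFn_eq_exp_sum_mul_conj :
    (gaussFn : (Fin n → ℂ) → ℂ) = fun z => cexp (-(π / 2) * ∑ i, z i * conj (z i) : ℂ) := by
  funext z
  simp [gaussFn, mul_conj]

theorem contDiff_gaussFn : ContDiff ℝ ∞ (gaussFn : (Fin n → ℂ) → ℂ) := by
  rw [gaussFn_eq_exp_sum_mul_conj]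
  fun_prop

theorem dirDeriv_gaussFn (v z : Fin n → ℂ) :
    dirDeriv v gaussFn z = -(π / 2) * (∑ i, (v i * conj (z i) + z i * conj (v i))) * gaussFn z := by
  have hsum : dirDeriv v (fun y : Fin n → ℂ => ∑ i, y i * conj (y i)) z =
      ∑ i, (v i * conj (z i) + z i * conj (v i)) := by
    rw [dirDeriv_sum _ (fun i _ => by fun_prop)]
    simp (disch := fun_prop) only [dirDeriv_mul, dirDeriv_coord, dirDeriv_conj_coord]
  rw [gaussFn_eq_exp_sum_mul_conj, dirDeriv_cexp (by fun_prop), dirDeriv_const_mul _ (by fun_prop),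
    hsum]
  ring

theorem wirtingerDBar_gaussFn (j : Fin n) (z : Fin n → ℂ) :
    wirtingerDBar j gaussFn z = -(π / 2) * z j * gaussFn z := by
  simp only [wirtingerDBar_eq_dirDeriv, dirDeriv_gaussFn, Pi.single_apply, ite_mul, mul_ite,
    apply_ite (starRingEnd ℂ), map_one, map_zero, one_mul, zero_mul, mul_one, mul_zero, conj_I,
    Finset.sum_add_distrib, Finset.sum_ite_eq', Finset.mem_univ, if_true]
  linear_combination (π / 4 * (z j - conj (z j)) * gaussFn z) * I_sq

theorem bPlusOp_mul_gaussFn {h : (Fin n → ℂ) → ℂ} (hh : Differentiable ℝ h) (j : Fin n) :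
    bPlusOp j (fun z => h z * gaussFn z) = fun z => 2 * wirtingerDBar j h z * gaussFn z := by
  funext z
  rw [bPlusOp, wirtingerDBar_mul j (hh z) (contDiff_gaussFn.differentiable (by simp) z),
    wirtingerDBar_gaussFn]
  ring

def groundState (β : Fin n → ℕ) (z : Fin n → ℂ) : ℂ :=
  (∏ j, z j ^ β j) * gaussFn z

theorem contDiff_groundState (β : Fin n → ℕ) : ContDiff ℝ ∞ (groundState β) := by
  have := contDiff_gaussFn (n := n)
  unfold groundState
  fun_prop

theorem bPlusOp_groundState (β : Fin n → ℕ) (j : Fin n) : bPlusOp j (groundState β) = 0 := by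
  have hmono : Differentiable ℂ fun z : Fin n → ℂ => ∏ k, z k ^ β k := by fun_prop
  unfold groundState
  rw [bPlusOp_mul_gaussFn (hmono.restrictScalars ℝ)]
  funext z
  simp [wirtingerDBar_eq_zero_of_differentiableAt j (hmono z)]

end GroundState

theorem Module.End.mapsTo_eigenspace_of_mul_eq {R M : Type*} [CommRing R] [AddCommGroup M]
    [Module R M] {f g : Module.End R M} {c : R} (h : f * g = g * f + c • g) (μ : R) :
    Set.MapsTo g (f.eigenspace μ) (f.eigenspace (μ + c)) := by
  intro x hx
  rw [SetLike.mem_coe, Module.End.mem_eigenspace_iff] at hx ⊢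
  calc f (g x) = (f * g) x := rfl
    _ = g (f x) + c • g x := by rw [h]; rfl
    _ = (μ + c) • g x := by rw [hx, map_smul, add_smul]

theorem sum_mul_mul_eq_of_commutation {R A ι : Type*} [CommSemiring R] [Semiring A] [Algebra R A]
    [Fintype ι] [DecidableEq ι] {a b : ι → A} {c : R} (ha : ∀ j k, Commute (a j) (a k))
    (hba : ∀ j k, b j * a k = a k * b j + if j = k then algebraMap R A c else 0) (k : ι) :
    (∑ j, a j * b j) * a k = a k * ∑ j, a j * b j + c • a k := by
  simp only [Finset.sum_mul, Finset.mul_sum, mul_assoc, hba, mul_add, mul_ite, mul_zero,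
    Finset.sum_add_distrib, Finset.sum_ite_eq', Finset.mem_univ, if_true]
  congr 1
  · refine Finset.sum_congr rfl fun j _ => ?_
    rw [← mul_assoc, ← mul_assoc, (ha j k).eq]
  · rw [Algebra.smul_def, Algebra.commutes]

theorem Set.mapsTo_iterate_of_mapsTo_add {X A : Type*} [AddMonoid A] {V : A → Set X}
    {T : X → X} {c : A} (h : ∀ μ, Set.MapsTo T (V μ) (V (μ + c))) (m : ℕ) (μ : A) :
    Set.MapsTo T^[m] (V μ) (V (μ + m • c)) := by
  induction m with
  | zero => simpa using Set.mapsTo_id (V μ)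
  | succ m ih =>
    rw [Function.iterate_succ', succ_nsmul, ← add_assoc]
    exact (h _).comp ih

theorem Set.mapsTo_foldr_comp_ofFn {X A : Type*} [AddCommMonoid A] {V : A → Set X} {m : ℕ}
    {T : Fin m → X → X} {c : Fin m → A} (h : ∀ i μ, Set.MapsTo (T i) (V μ) (V (μ + c i)))
    (μ : A) : Set.MapsTo ((List.ofFn T).foldr (· ∘ ·) id) (V μ) (V (μ + ∑ i, c i)) := by
  induction m generalizing μ with
  | zero => simpa using Set.mapsTo_id (V μ)
  | succ m ih =>
    rw [List.ofFn_succ, List.foldr_cons, Fin.sum_univ_succ, add_comm (c 0), ← add_assoc]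
    exact (h 0 _).comp (ih (fun i => h i.succ) μ)

section ModelOperator

variable (n : ℕ)

def smoothFunctions : Submodule ℂ ((Fin n → ℂ) → ℂ) where
  carrier := {f | ContDiff ℝ ∞ f}
  add_mem' {f g} (hf : ContDiff ℝ ∞ f) (hg : ContDiff ℝ ∞ g) := hf.add hg
  zero_mem' := (contDiff_const : ContDiff ℝ ∞ fun _ => (0 : ℂ))
  smul_mem' c f (hf : ContDiff ℝ ∞ f) := hf.const_smul c

variable {n}

theorem mem_smoothFunctions {f : (Fin n → ℂ) → ℂ} : f ∈ smoothFunctions n ↔ ContDiff ℝ ∞ f :=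
  Iff.rfl

theorem differentiable_of_mem_smoothFunctions (f : smoothFunctions n) :
    Differentiable ℝ (f : (Fin n → ℂ) → ℂ) :=
  (mem_smoothFunctions.1 f.2).differentiable (by simp)

def creation (j : Fin n) : Module.End ℂ (smoothFunctions n) where
  toFun f := ⟨bOp j f, (mem_smoothFunctions.1 f.2).bOp j⟩
  map_add' f g := Subtype.ext <|
    bOp_add (differentiable_of_mem_smoothFunctions f) (differentiable_of_mem_smoothFunctions g) j
  map_smul' c f := Subtype.ext <| bOp_smul c (differentiable_of_mem_smoothFunctions f) j

def annihilation (j : Fin n) : Module.End ℂ (smoothFunctions n) where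
  toFun f := ⟨bPlusOp j f, (mem_smoothFunctions.1 f.2).bPlusOp j⟩
  map_add' f g := Subtype.ext <|
    bPlusOp_add (differentiable_of_mem_smoothFunctions f) (differentiable_of_mem_smoothFunctions g) j
  map_smul' c f := Subtype.ext <| bPlusOp_smul c (differentiable_of_mem_smoothFunctions f) j

def modelOperator : Module.End ℂ (smoothFunctions n) :=
  ∑ j, creation j * annihilation j

theorem coe_modelOperator_apply (f : smoothFunctions n) :
    (modelOperator f : (Fin n → ℂ) → ℂ) = ∑ j, bOp j (bPlusOp j f) := by
  simp [modelOperator, creation, annihilation]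

theorem creation_commute (j k : Fin n) : Commute (creation j) (creation k) :=
  LinearMap.ext fun f => Subtype.ext (bOp_bOp_comm (mem_smoothFunctions.1 f.2) j k)

theorem annihilation_mul_creation (j k : Fin n) :
    annihilation j * creation k =
      creation k * annihilation j + if j = k then algebraMap ℂ _ (4 * π) else 0 := by
  refine LinearMap.ext fun f => Subtype.ext <| funext fun z => ?_
  have := bPlusOp_bOp (mem_smoothFunctions.1 f.2) j k z
  split_ifs at this ⊢
  · simp only [creation, annihilation, Module.End.mul_apply, LinearMap.add_apply,
      Module.algebraMap_end_apply, LinearMap.coe_mk, AddHom.coe_mk, Submodule.coe_add,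
      Submodule.coe_smul, Pi.add_apply, Pi.smul_apply, smul_eq_mul]
    linear_combination this
  · simpa [creation, annihilation] using this

theorem modelOperator_mul_creation (k : Fin n) :
    modelOperator * creation k = creation k * modelOperator + (4 * π : ℂ) • creation k :=
  sum_mul_mul_eq_of_commutation creation_commute annihilation_mul_creation k

def modelEigenfunctions (μ : ℂ) : Set ((Fin n → ℂ) → ℂ) :=
  Subtype.val '' ((modelOperator (n := n)).eigenspace μ : Set (smoothFunctions n))

theorem mapsTo_bOp_modelEigenfunctions (k : Fin n) (μ : ℂ) :
    Set.MapsTo (bOp k) (modelEigenfunctions μ) (modelEigenfunctions (μ + 4 * π)) := by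
  rintro _ ⟨f, hf, rfl⟩
  exact ⟨creation k f, Module.End.mapsTo_eigenspace_of_mul_eq (modelOperator_mul_creation k) μ hf,
    rfl⟩

theorem groundState_mem_modelEigenfunctions (β : Fin n → ℕ) :
    groundState β ∈ modelEigenfunctions 0 := by
  refine ⟨⟨groundState β, contDiff_groundState β⟩, ?_, rfl⟩
  have hann : ∀ j, annihilation j ⟨groundState β, contDiff_groundState β⟩ = 0 := fun j =>
    Subtype.ext (bPlusOp_groundState β j)
  simp [modelOperator, hann]

end ModelOperator

/-- The functions `f_{α,β} = b^α (z^β exp(-(π/2) Σ |z_i|²))` are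
eigenfunctions of the model operator `𝓛 = Σ_j b_j b_j⁺` with eigenvalue `4π Σ α_i`. -/
theorem modelOp_eigenfunction {n : ℕ} (α β : Fin n → ℕ) (z : Fin n → ℂ) :
    (∑ j, bOp j (bPlusOp j (eigFun α β)) z)
      = 4 * (Real.pi : ℂ) * ((∑ i, α i : ℕ) : ℂ) * eigFun α β z := by
  obtain ⟨f, hf, hfα⟩ := Set.mapsTo_foldr_comp_ofFn
    (fun j => Set.mapsTo_iterate_of_mapsTo_add (mapsTo_bOp_modelEigenfunctions j) (α j)) 0
    (groundState_mem_modelEigenfunctions β)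
  have hfz := congrFun (congrArg Subtype.val (Module.End.mem_eigenspace_iff.mp hf)) z
  change _ = eigFun α β at hfα
  simp only [coe_modelOperator_apply, Submodule.coe_smul, Finset.sum_apply, Pi.smul_apply,
    smul_eq_mul, hfα] at hfz
  rw [hfz, zero_add, ← Finset.sum_smul, nsmul_eq_mul]
  ring
end
end

section
/- For all 1 ≤ i, j ≤ n and all z, z' ∈ ℂ^n, ∫_{ℂ^n} w_i · 𝒫(z, w) · w̄_j · 𝒫(w, z') dW = ((1/π) δ_{ij} + z_i z̄'_j) · 𝒫(z, z'). -/
open MeasureTheory Complex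

noncomputable section

/-! Both kernels split over the coordinates, so the integral factors into `n` integrals over `ℂ`
of a Gaussian `exp(-π(|u|² - a ū - ā' u))` against `1`, `u`, `ū` or `|u|²`. In real coordinates
`u = x + i y` such a Gaussian is a product of two one-dimensional Gaussians with complex linear
terms, whose first and second moments follow from the vanishing of the integral of a derivative. -/

open Real Finset ComplexConjugate

section TiltedGaussian

variable {b : ℂ}

def tiltedGaussian (b c : ℂ) (x : ℝ) : ℂ := cexp (-b * ((x : ℂ) ^ 2 - c * x))

lemma hasDerivAt_tiltedGaussian (b c : ℂ) (x : ℝ) :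
    HasDerivAt (tiltedGaussian b c) (-b * (2 * x - c) * tiltedGaussian b c x) x := by
  have hx : HasDerivAt (fun t : ℝ => (t : ℂ)) 1 x := (hasDerivAt_id x).ofReal_comp
  have h : HasDerivAt (fun t : ℝ => -b * ((t : ℂ) ^ 2 - c * t)) (-b * (2 * x - c)) x := by
    simpa using ((hx.pow 2).sub (hx.const_mul c)).const_mul (-b)
  rw [mul_comm]
  exact h.cexp

lemma integrable_pow_mul_tiltedGaussian (hb : 0 < b.re) (m : ℕ) (c : ℂ) :
    Integrable (fun x : ℝ => (x : ℂ) ^ m * tiltedGaussian b c x) := by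
  have hshift (s : ℝ) : Integrable (fun x : ℝ => tiltedGaussian b c x * cexp ↑(s * x)) := by
    convert integrable_cexp_quadratic hb (b * c + s) 0 using 2 with x
    rw [tiltedGaussian, ← Complex.exp_add]
    push_cast
    ring_nf
  refine (((hshift 1).norm.add (hshift (-1)).norm).const_mul (m.factorial : ℝ)).mono'
    (by unfold tiltedGaussian; fun_prop) (Filter.Eventually.of_forall fun x => ?_)
  -- `|x| ^ m ≤ m! e^{|x|} ≤ m! (e^x + e^{-x})`
  have hpow : |x| ^ m ≤ m.factorial * (rexp x + rexp (-x)) := by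
    have := Real.pow_div_factorial_le_exp _ (abs_nonneg x) m
    rw [div_le_iff₀ (by positivity)] at this
    have : rexp |x| ≤ rexp x + rexp (-x) := by
      rcases abs_cases x with ⟨h, -⟩ | ⟨h, -⟩ <;> rw [h] <;> linarith [exp_pos x, exp_pos (-x)]
    nlinarith [Nat.factorial_pos m]
  simp only [Pi.add_apply, norm_mul, norm_pow, norm_real, Real.norm_eq_abs, norm_exp_ofReal,
    one_mul, neg_one_mul]
  calc |x| ^ m * ‖tiltedGaussian b c x‖
      ≤ m.factorial * (rexp x + rexp (-x)) * ‖tiltedGaussian b c x‖ := by gcongr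
    _ = _ := by ring

lemma integrable_tiltedGaussian (hb : 0 < b.re) (c : ℂ) : Integrable (tiltedGaussian b c) := by
  simpa using integrable_pow_mul_tiltedGaussian hb 0 c

lemma integrable_mul_tiltedGaussian (hb : 0 < b.re) (c : ℂ) :
    Integrable (fun x : ℝ => (x : ℂ) * tiltedGaussian b c x) := by
  simpa using integrable_pow_mul_tiltedGaussian hb 1 c

lemma integral_tiltedGaussian (hb : 0 < b.re) (c : ℂ) :
    ∫ x : ℝ, tiltedGaussian b c x = (π / b) ^ (1 / 2 : ℂ) * cexp (b * c ^ 2 / 4) := by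
  have hb0 : b ≠ 0 := ne_zero_of_re_pos hb
  have h := integral_cexp_quadratic (b := -b) (by simpa using hb) (b * c) 0
  rw [neg_neg] at h
  convert h using 3
  · unfold tiltedGaussian; ring_nf
  · field_simp; ring

lemma integral_mul_tiltedGaussian (hb : 0 < b.re) (c : ℂ) :
    ∫ x : ℝ, x * tiltedGaussian b c x = c / 2 * ∫ x : ℝ, tiltedGaussian b c x := by
  have hb0 : b ≠ 0 := ne_zero_of_re_pos hb
  have h0 := integrable_tiltedGaussian hb c
  have h1 := integrable_mul_tiltedGaussian hb c
  have hderiv : ∀ x : ℝ, -b * (2 * x - c) * tiltedGaussian b c x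
      = -2 * b * (x * tiltedGaussian b c x) + b * c * tiltedGaussian b c x := fun x => by ring
  have h := integral_eq_zero_of_hasDerivAt_of_integrable (hasDerivAt_tiltedGaussian b c)
    (by simp_rw [hderiv]; exact (h1.const_mul _).add (h0.const_mul _)) h0
  simp_rw [hderiv] at h
  rw [integral_add (h1.const_mul _) (h0.const_mul _), integral_const_mul, integral_const_mul] at h
  apply mul_left_cancel₀ hb0
  linear_combination -h / 2

lemma integral_sq_mul_tiltedGaussian (hb : 0 < b.re) (c : ℂ) :
    ∫ x : ℝ, x ^ 2 * tiltedGaussian b c x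
      = (1 / (2 * b) + c ^ 2 / 4) * ∫ x : ℝ, tiltedGaussian b c x := by
  have hb0 : b ≠ 0 := ne_zero_of_re_pos hb
  have h0 := integrable_tiltedGaussian hb c
  have h1 := integrable_mul_tiltedGaussian hb c
  have h2 := integrable_pow_mul_tiltedGaussian hb 2 c
  have hx (x : ℝ) : HasDerivAt (fun t : ℝ => (t : ℂ)) 1 x := (hasDerivAt_id x).ofReal_comp
  have hderiv : ∀ x : ℝ, 1 * tiltedGaussian b c x + x * (-b * (2 * x - c) * tiltedGaussian b c x)
      = tiltedGaussian b c x + (-2 * b * (x ^ 2 * tiltedGaussian b c x)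
        + b * c * (x * tiltedGaussian b c x)) := fun x => by ring
  have h := integral_eq_zero_of_hasDerivAt_of_integrable
    (fun x => (hx x).mul (hasDerivAt_tiltedGaussian b c x))
    (by simp_rw [hderiv]; exact h0.add ((h2.const_mul _).add (h1.const_mul _))) h1
  simp_rw [hderiv] at h
  have h21 : Integrable (fun x : ℝ => -2 * b * ((x : ℂ) ^ 2 * tiltedGaussian b c x)
      + b * c * (x * tiltedGaussian b c x)) := (h2.const_mul _).add (h1.const_mul _)
  rw [integral_add h0 h21, integral_add (h2.const_mul _) (h1.const_mul _), integral_const_mul,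
    integral_const_mul, integral_mul_tiltedGaussian hb] at h
  have h2b : 2 * b ≠ 0 := mul_ne_zero two_ne_zero hb0
  apply mul_left_cancel₀ h2b
  rw [add_mul, mul_add, ← mul_assoc, mul_one_div_cancel h2b, one_mul]
  linear_combination -h

end TiltedGaussian

section PlaneGaussian

lemma integral_re_mul_im (f g : ℝ → ℂ) :
    ∫ u : ℂ, f u.re * g u.im = (∫ x, f x) * ∫ y, g y := by
  rw [← integral_prod_mul, ← Measure.volume_eq_prod]
  exact volume_preserving_equiv_real_prod.integral_comp' (fun p : ℝ × ℝ => f p.1 * g p.2)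

lemma MeasureTheory.Integrable.re_mul_im {f g : ℝ → ℂ} (hf : Integrable f) (hg : Integrable g) :
    Integrable (fun u : ℂ => f u.re * g u.im) :=
  (volume_preserving_equiv_real_prod.integrable_comp_emb
    measurableEquivRealProd.measurableEmbedding).mpr (hf.mul_prod hg)

def tiltedGaussianPlane (b α β : ℂ) (u : ℂ) : ℂ :=
  cexp (-b * ((normSq u : ℂ) - α * conj u - β * u))

lemma tiltedGaussianPlane_eq_re_mul_im (b α β u : ℂ) :
    tiltedGaussianPlane b α β u
      = tiltedGaussian b (α + β) u.re * tiltedGaussian b (I * (β - α)) u.im := by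
  rw [tiltedGaussianPlane, tiltedGaussian, tiltedGaussian, ← Complex.exp_add]
  congr 1
  conv_lhs => rw [← re_add_im u]
  rw [normSq_add_mul_I, map_add, map_mul, conj_ofReal, conj_ofReal, conj_I]
  push_cast
  ring

variable {b : ℂ}

lemma integral_tiltedGaussianPlane (hb : 0 < b.re) (α β : ℂ) :
    ∫ u, tiltedGaussianPlane b α β u = π / b * cexp (b * α * β) := by
  simp_rw [tiltedGaussianPlane_eq_re_mul_im]
  rw [integral_re_mul_im, integral_tiltedGaussian hb, integral_tiltedGaussian hb,
    mul_mul_mul_comm, ← sq, one_div, cpow_ofNat_inv_pow, ← Complex.exp_add]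
  congr 2
  linear_combination b * (β - α) ^ 2 / 4 * I_sq

lemma integral_tiltedGaussianPlane_eq_mul (α β : ℂ) :
    ∫ u, tiltedGaussianPlane b α β u
      = (∫ x : ℝ, tiltedGaussian b (α + β) x) * ∫ y : ℝ, tiltedGaussian b (I * (β - α)) y := by
  simp_rw [tiltedGaussianPlane_eq_re_mul_im]
  exact integral_re_mul_im _ _

lemma integral_mul_tiltedGaussianPlane (hb : 0 < b.re) (α β : ℂ) :
    ∫ u, u * tiltedGaussianPlane b α β u = α * ∫ u, tiltedGaussianPlane b α β u := by
  have h₀ := integrable_tiltedGaussian hb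
  have h₁ := integrable_mul_tiltedGaussian hb
  have hsplit (u : ℂ) : u * tiltedGaussianPlane b α β u
      = (u.re * tiltedGaussian b (α + β) u.re) * tiltedGaussian b (I * (β - α)) u.im
        + tiltedGaussian b (α + β) u.re * (I * (u.im * tiltedGaussian b (I * (β - α)) u.im)) := by
    rw [tiltedGaussianPlane_eq_re_mul_im]
    linear_combination (-(tiltedGaussian b (α + β) u.re * tiltedGaussian b (I * (β - α)) u.im))
      * re_add_im u
  simp_rw [hsplit]
  rw [integral_add ((h₁ _).re_mul_im (h₀ _))
      ((h₀ _).re_mul_im ((h₁ _).const_mul I)),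
    integral_re_mul_im (fun x : ℝ => (x : ℂ) * tiltedGaussian b (α + β) x),
    integral_re_mul_im (tiltedGaussian b (α + β))
      (fun y : ℝ => I * ((y : ℂ) * tiltedGaussian b (I * (β - α)) y)),
    integral_const_mul, integral_mul_tiltedGaussian hb, integral_mul_tiltedGaussian hb,
    integral_tiltedGaussianPlane_eq_mul]
  linear_combination (β - α) / 2 * (∫ x : ℝ, tiltedGaussian b (α + β) x)
    * (∫ y : ℝ, tiltedGaussian b (I * (β - α)) y) * I_sq

lemma integral_conj_mul_tiltedGaussianPlane (hb : 0 < b.re) (α β : ℂ) :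
    ∫ u, conj u * tiltedGaussianPlane b α β u = β * ∫ u, tiltedGaussianPlane b α β u := by
  have h₀ := integrable_tiltedGaussian hb
  have h₁ := integrable_mul_tiltedGaussian hb
  have hsplit (u : ℂ) : conj u * tiltedGaussianPlane b α β u
      = (u.re * tiltedGaussian b (α + β) u.re) * tiltedGaussian b (I * (β - α)) u.im
        + tiltedGaussian b (α + β) u.re * (-I * (u.im * tiltedGaussian b (I * (β - α)) u.im)) := by
    have hconj : conj u = u.re - u.im * I := by apply Complex.ext <;> simp
    rw [tiltedGaussianPlane_eq_re_mul_im, hconj]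
    ring
  simp_rw [hsplit]
  rw [integral_add ((h₁ _).re_mul_im (h₀ _))
      ((h₀ _).re_mul_im ((h₁ _).const_mul (-I))),
    integral_re_mul_im (fun x : ℝ => (x : ℂ) * tiltedGaussian b (α + β) x),
    integral_re_mul_im (tiltedGaussian b (α + β))
      (fun y : ℝ => -I * ((y : ℂ) * tiltedGaussian b (I * (β - α)) y)),
    integral_const_mul, integral_mul_tiltedGaussian hb, integral_mul_tiltedGaussian hb,
    integral_tiltedGaussianPlane_eq_mul]
  linear_combination (α - β) / 2 * (∫ x : ℝ, tiltedGaussian b (α + β) x)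
    * (∫ y : ℝ, tiltedGaussian b (I * (β - α)) y) * I_sq

lemma integral_mul_conj_mul_tiltedGaussianPlane (hb : 0 < b.re) (α β : ℂ) :
    ∫ u, u * conj u * tiltedGaussianPlane b α β u
      = (1 / b + α * β) * ∫ u, tiltedGaussianPlane b α β u := by
  have h₀ := integrable_tiltedGaussian hb
  have h₂ := integrable_pow_mul_tiltedGaussian hb 2
  have hsplit (u : ℂ) : u * conj u * tiltedGaussianPlane b α β u
      = (u.re ^ 2 * tiltedGaussian b (α + β) u.re) * tiltedGaussian b (I * (β - α)) u.im
        + tiltedGaussian b (α + β) u.re * (u.im ^ 2 * tiltedGaussian b (I * (β - α)) u.im) := by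
    rw [mul_conj, normSq_apply, tiltedGaussianPlane_eq_re_mul_im]
    push_cast
    ring
  simp_rw [hsplit]
  rw [integral_add ((h₂ _).re_mul_im (h₀ _))
      ((h₀ _).re_mul_im (h₂ _)),
    integral_re_mul_im (fun x : ℝ => (x : ℂ) ^ 2 * tiltedGaussian b (α + β) x),
    integral_re_mul_im (tiltedGaussian b (α + β))
      (fun y : ℝ => (y : ℂ) ^ 2 * tiltedGaussian b (I * (β - α)) y),
    integral_sq_mul_tiltedGaussian hb, integral_sq_mul_tiltedGaussian hb,
    integral_tiltedGaussianPlane_eq_mul]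
  linear_combination (β - α) ^ 2 / 4 * (∫ x : ℝ, tiltedGaussian b (α + β) x)
    * (∫ y : ℝ, tiltedGaussian b (I * (β - α)) y) * I_sq

end PlaneGaussian

lemma integral_mul_conj_mul_prod {ι : Type*} [Fintype ι] [DecidableEq ι] (f : ι → ℂ → ℂ)
    (i j : ι) :
    ∫ w : ι → ℂ, w i * conj (w j) * ∏ k, f k (w k)
      = ∏ k, ∫ u, (if k = i then u else 1) * (if k = j then conj u else 1) * f k u := by
  rw [← integral_fintype_prod_eq_prod]
  congr 1 with w
  rw [prod_mul_distrib, prod_mul_distrib, Fintype.prod_ite_eq', Fintype.prod_ite_eq']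

lemma prod_ite_ite_eq {ι M : Type*} [Fintype ι] [DecidableEq ι] [CommMonoid M] (i j : ι)
    (a b c : ι → M) :
    ∏ k, (if k = i then (if k = j then c k else a k) else if k = j then b k else 1)
      = if i = j then c i else a i * b j := by
  split_ifs with hij
  · subst hij
    rw [Fintype.prod_eq_single i fun k hk => by simp [hk]]
    simp
  · rw [Fintype.prod_eq_mul i j hij fun k hk => by simp [hk.1, hk.2]]
    simp [hij, Ne.symm hij]

def bergK1 (a u : ℂ) : ℂ :=
  cexp (-(π / 2) * ((normSq a : ℂ) + normSq u - 2 * a * conj u))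

lemma bergK_eq_prod {n : ℕ} (z w : Fin n → ℂ) : bergK z w = ∏ k, bergK1 (z k) (w k) := by
  rw [bergK, mul_sum, Complex.exp_sum]
  rfl

lemma bergK1_mul_bergK1 (a a' u : ℂ) :
    bergK1 a u * bergK1 u a'
      = bergK1 a a' * cexp (-(π * a * conj a')) * tiltedGaussianPlane π a (conj a') u := by
  simp only [bergK1, tiltedGaussianPlane, ← Complex.exp_add]
  congr 1
  ring

lemma integral_ite_mul_ite_mul_bergK1_mul_bergK1 {ι : Type*} [DecidableEq ι] (i j k : ι)
    (a a' : ℂ) :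
    ∫ u, (if k = i then u else 1) * (if k = j then conj u else 1) * (bergK1 a u * bergK1 u a')
      = (if k = i then (if k = j then 1 / π + a * conj a' else a) else if k = j then conj a' else 1)
        * bergK1 a a' := by
  have hπ : 0 < (π : ℂ).re := by simpa using pi_pos
  have hπ0 : (π : ℂ) ≠ 0 := ofReal_ne_zero.mpr pi_ne_zero
  simp_rw [bergK1_mul_bergK1, mul_left_comm _ (bergK1 a a' * _), integral_const_mul]
  split_ifs <;>
  simp only [one_mul, mul_one, integral_mul_tiltedGaussianPlane hπ,
    integral_conj_mul_tiltedGaussianPlane hπ, integral_mul_conj_mul_tiltedGaussianPlane hπ,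
    integral_tiltedGaussianPlane hπ, div_self hπ0, Complex.exp_neg] <;>
  field_simp

/-- `∫ w_i 𝒫(z, w) w̄_j 𝒫(w, z') dW = ((1/π) δ_{ij} + z_i z̄'_j) 𝒫(z, z')`. -/
theorem bergK_wi_wjbar {n : ℕ} (i j : Fin n) (z z' : Fin n → ℂ) :
    (∫ w : Fin n → ℂ, w i * bergK z w * (starRingEnd ℂ) (w j) * bergK w z')
      = ((1 / (Real.pi : ℂ)) * (if i = j then 1 else 0) + z i * (starRingEnd ℂ) (z' j))
          * bergK z z' := by
  calc (∫ w : Fin n → ℂ, w i * bergK z w * conj (w j) * bergK w z')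
      = ∫ w : Fin n → ℂ, w i * conj (w j) * ∏ k, bergK1 (z k) (w k) * bergK1 (w k) (z' k) := by
        congr 1 with w
        rw [bergK_eq_prod, bergK_eq_prod, prod_mul_distrib]
        ring
    _ = ∏ k, (if k = i then (if k = j then 1 / π + z k * conj (z' k) else z k)
          else if k = j then conj (z' k) else 1) * bergK1 (z k) (z' k) := by
        rw [integral_mul_conj_mul_prod fun k u => bergK1 (z k) u * bergK1 u (z' k)]
        exact prod_congr rfl fun k _ => integral_ite_mul_ite_mul_bergK1_mul_bergK1 i j k _ _
    _ = _ := by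
        rw [prod_mul_distrib, prod_ite_ite_eq, ← bergK_eq_prod]
        split_ifs with hij
        · subst hij; ring
        · simp
end
end

section
/- For all 1 ≤ i, j ≤ n and all z, z' ∈ ℂ^n, ∫_{ℂ^n} w̄_i · w_j · 𝒫(z, w) · 𝒫(w, z') dW = ((1/π) δ_{ij} + z̄'_i z_j) · 𝒫(z, z'). -/
open MeasureTheory Complex

noncomputable section

/-! The product `𝒫(z, w) 𝒫(w, z')` is `𝒫(z, z')` times the product over the coordinates of the
complex-shifted Gaussians `exp (-π (w̄_k - z̄'_k) (w_k - z_k))`, so the integral factorizes. In the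
real coordinates `w = x + i y` each factor is a product of two real Gaussians `exp (-π (x - c)²)`
with complex centres `c`; these have mass `1`, mean `c` and second moment `c² + 1 / (2π)`, so
under the `k`-th factor `w_k`, `w̄_k` and `w̄_k w_k` have means `z_k`, `z̄'_k` and
`z̄'_k z_k + 1 / π`. -/

section ShiftedGaussian

open Real

def shiftedGaussian (c : ℂ) (x : ℝ) : ℂ := cexp (-π * (x - c) ^ 2)

lemma norm_shiftedGaussian_le (c : ℂ) (x : ℝ) :
    ‖shiftedGaussian c x‖ ≤ rexp (π * ‖c‖ ^ 2) * rexp (-(π / 2) * x ^ 2) := by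
  have hre : (-π * ((x : ℂ) - c) ^ 2).re = -π * ((x - c.re) ^ 2 - c.im ^ 2) := by
    simp only [sq, mul_re, sub_re, sub_im, neg_re, ofReal_re, ofReal_im, neg_im]; ring
  rw [shiftedGaussian, norm_exp, hre, ← Real.exp_add, Complex.sq_norm, normSq_apply]
  gcongr
  nlinarith [pi_pos, mul_nonneg pi_pos.le (sq_nonneg (x - 2 * c.re))]

lemma integrable_pow_mul_shiftedGaussian (k : ℕ) (c : ℂ) :
    Integrable fun x : ℝ => (x : ℂ) ^ k * shiftedGaussian c x := by
  have hmaj : Integrable fun x : ℝ =>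
      rexp (π * ‖c‖ ^ 2) * ‖x ^ (k : ℝ) * rexp (-(π / 2) * x ^ 2)‖ :=
    (integrable_rpow_mul_exp_neg_mul_sq (by positivity)
      (by linarith [k.cast_nonneg (α := ℝ)])).norm.const_mul _
  refine hmaj.mono' (by unfold shiftedGaussian; fun_prop) (ae_of_all _ fun x => ?_)
  rw [norm_mul, norm_mul, norm_pow, norm_real, Real.rpow_natCast, norm_pow,
    norm_of_nonneg (Real.exp_pos _).le]
  calc ‖x‖ ^ k * ‖shiftedGaussian c x‖
      ≤ ‖x‖ ^ k * (rexp (π * ‖c‖ ^ 2) * rexp (-(π / 2) * x ^ 2)) := by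
        gcongr; exact norm_shiftedGaussian_le c x
    _ = _ := by ring

lemma integrable_shiftedGaussian (c : ℂ) : Integrable (shiftedGaussian c) := by
  simpa using integrable_pow_mul_shiftedGaussian 0 c

lemma integrable_mul_shiftedGaussian (c : ℂ) :
    Integrable fun x : ℝ => (x : ℂ) * shiftedGaussian c x := by
  simpa using integrable_pow_mul_shiftedGaussian 1 c

lemma hasDerivAt_shiftedGaussian (c : ℂ) (x : ℝ) :
    HasDerivAt (shiftedGaussian c) (-2 * π * (x - c) * shiftedGaussian c x) x := by
  have h : HasDerivAt (fun y : ℝ => -(π : ℂ) * ((y : ℂ) - c) ^ 2)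
      (-π * (2 * ((x : ℂ) - c))) x := by
    simpa using (((hasDerivAt_id x).ofReal_comp.sub_const c).pow 2).const_mul (-(π : ℂ))
  exact h.cexp.congr_deriv (by rw [shiftedGaussian]; ring)

lemma integral_shiftedGaussian (c : ℂ) : ∫ x : ℝ, shiftedGaussian c x = 1 := by
  have hπ : (-(π : ℂ)).re < 0 := by simpa using pi_pos
  have h := integral_cexp_quadratic hπ (2 * π * c) (-π * c ^ 2)
  have hπ0 : (π : ℂ) ≠ 0 := ofReal_ne_zero.2 pi_ne_zero
  rw [neg_neg, div_self hπ0, one_cpow, one_mul,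
    Complex.exp_eq_one_iff.2 ⟨0, by field_simp; ring⟩] at h
  rw [← h]
  congr 1 with x
  rw [shiftedGaussian]; ring_nf

-- At `k = 0` the last term carries the factor `0`, so the truncated `k - 1` does no harm.
lemma integral_pow_succ_mul_shiftedGaussian (k : ℕ) (c : ℂ) :
    ∫ x : ℝ, (x : ℂ) ^ (k + 1) * shiftedGaussian c x
      = c * (∫ x : ℝ, (x : ℂ) ^ k * shiftedGaussian c x)
        + k / (2 * π) * ∫ x : ℝ, (x : ℂ) ^ (k - 1) * shiftedGaussian c x := by
  have hint (m : ℕ) := integrable_pow_mul_shiftedGaussian m c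
  have hderiv (x : ℝ) : HasDerivAt (fun x : ℝ => (x : ℂ) ^ k * shiftedGaussian c x)
      (k * ((x : ℂ) ^ (k - 1) * shiftedGaussian c x)
        + 2 * π * c * ((x : ℂ) ^ k * shiftedGaussian c x)
        - 2 * π * ((x : ℂ) ^ (k + 1) * shiftedGaussian c x)) x := by
    refine ((hasDerivAt_pow k (x : ℂ)).comp_ofReal.mul
      (hasDerivAt_shiftedGaussian c x)).congr_deriv ?_
    ring
  have hzero := integral_eq_zero_of_hasDerivAt_of_integrable hderiv
    ((((hint _).const_mul _).add ((hint _).const_mul _)).sub ((hint _).const_mul _)) (hint k)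
  rw [integral_sub, integral_add, integral_const_mul, integral_const_mul,
    integral_const_mul] at hzero
  · have h2π : (2 * π : ℂ) ≠ 0 := by simp [pi_ne_zero]
    rw [div_mul_eq_mul_div, add_div' _ _ _ h2π, eq_div_iff h2π]
    linear_combination -hzero
  all_goals first
    | exact (hint _).const_mul _
    | exact ((hint _).const_mul _).add ((hint _).const_mul _)

lemma integral_mul_shiftedGaussian (c : ℂ) :
    ∫ x : ℝ, (x : ℂ) * shiftedGaussian c x = c := by
  simpa [integral_shiftedGaussian] using integral_pow_succ_mul_shiftedGaussian 0 c

lemma integral_sq_mul_shiftedGaussian (c : ℂ) :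
    ∫ x : ℝ, (x : ℂ) ^ 2 * shiftedGaussian c x = c ^ 2 + 1 / (2 * π) := by
  rw [integral_pow_succ_mul_shiftedGaussian 1 c]
  simp only [pow_one, Nat.sub_self, pow_zero, one_mul, integral_shiftedGaussian, Nat.cast_one]
  rw [integral_mul_shiftedGaussian]
  ring

end ShiftedGaussian

section ComplexCoordinates

variable {𝕜 : Type*} [RCLike 𝕜]

lemma integral_comp_re_mul_comp_im (f g : ℝ → 𝕜) :
    ∫ w : ℂ, f w.re * g w.im = (∫ x, f x) * ∫ y, g y := by
  rw [← volume_preserving_equiv_real_prod.symm.integral_comp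
    measurableEquivRealProd.symm.measurableEmbedding, Measure.volume_eq_prod, ← integral_prod_mul]
  rfl

lemma MeasureTheory.Integrable.comp_re_mul_comp_im {f g : ℝ → 𝕜} (hf : Integrable f)
    (hg : Integrable g) :
    Integrable fun w : ℂ => f w.re * g w.im := by
  rw [← volume_preserving_equiv_real_prod.symm.integrable_comp_emb
    measurableEquivRealProd.symm.measurableEmbedding, Measure.volume_eq_prod]
  exact hf.mul_prod hg

end ComplexCoordinates

section ComplexShiftedGaussian

open Real ComplexConjugate

-- For `a = conj b` this is the Gaussian `exp (-π |w - b|²)` centred at `b`.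
def complexShiftedGaussian (a b w : ℂ) : ℂ := cexp (-π * ((conj w - a) * (w - b)))

lemma complexShiftedGaussian_eq (a b w : ℂ) :
    complexShiftedGaussian a b w
      = shiftedGaussian ((a + b) / 2) w.re * shiftedGaussian (I * (a - b) / 2) w.im := by
  rw [complexShiftedGaussian, shiftedGaussian, shiftedGaussian, ← Complex.exp_add]
  congr 1
  conv_lhs => rw [← re_add_im w]
  simp only [map_add, map_mul, conj_ofReal, conj_I]
  linear_combination (π * (w.im : ℂ) ^ 2 + π * (a - b) ^ 2 / 4) * I_sq

variable (a b : ℂ)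

lemma integral_complexShiftedGaussian : ∫ w, complexShiftedGaussian a b w = 1 := by
  simp_rw [complexShiftedGaussian_eq]
  rw [integral_comp_re_mul_comp_im, integral_shiftedGaussian, integral_shiftedGaussian, one_mul]

lemma integral_mul_complexShiftedGaussian : ∫ w, w * complexShiftedGaussian a b w = b := by
  set φ := shiftedGaussian ((a + b) / 2)
  set ψ := shiftedGaussian (I * (a - b) / 2)
  have h (w : ℂ) : w * complexShiftedGaussian a b w
      = (w.re * φ w.re) * ψ w.im + I * (φ w.re * (w.im * ψ w.im)) := by
    rw [complexShiftedGaussian_eq]; nth_rewrite 1 [← re_add_im w]; ring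
  simp_rw [h]
  rw [integral_add ((integrable_mul_shiftedGaussian _).comp_re_mul_comp_im
      (integrable_shiftedGaussian _))
      (((integrable_shiftedGaussian _).comp_re_mul_comp_im
      (integrable_mul_shiftedGaussian _)).const_mul I), integral_const_mul,
    integral_comp_re_mul_comp_im (fun x : ℝ => (x : ℂ) * φ x) ψ,
    integral_comp_re_mul_comp_im φ (fun y : ℝ => (y : ℂ) * ψ y)]
  simp only [φ, ψ, integral_mul_shiftedGaussian, integral_shiftedGaussian]
  linear_combination ((a - b) / 2) * I_sq

lemma integral_conj_mul_complexShiftedGaussian :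
    ∫ w, conj w * complexShiftedGaussian a b w = a := by
  set φ := shiftedGaussian ((a + b) / 2)
  set ψ := shiftedGaussian (I * (a - b) / 2)
  have h (w : ℂ) : conj w * complexShiftedGaussian a b w
      = (w.re * φ w.re) * ψ w.im + -I * (φ w.re * (w.im * ψ w.im)) := by
    rw [complexShiftedGaussian_eq]; nth_rewrite 1 [← re_add_im w]
    simp only [map_add, map_mul, conj_ofReal, conj_I]; ring
  simp_rw [h]
  rw [integral_add ((integrable_mul_shiftedGaussian _).comp_re_mul_comp_im
      (integrable_shiftedGaussian _))
      (((integrable_shiftedGaussian _).comp_re_mul_comp_im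
      (integrable_mul_shiftedGaussian _)).const_mul _), integral_const_mul,
    integral_comp_re_mul_comp_im (fun x : ℝ => (x : ℂ) * φ x) ψ,
    integral_comp_re_mul_comp_im φ (fun y : ℝ => (y : ℂ) * ψ y)]
  simp only [φ, ψ, integral_mul_shiftedGaussian, integral_shiftedGaussian]
  linear_combination (-(a - b) / 2) * I_sq

lemma integral_conj_mul_mul_complexShiftedGaussian :
    ∫ w, conj w * w * complexShiftedGaussian a b w = a * b + 1 / π := by
  set φ := shiftedGaussian ((a + b) / 2)
  set ψ := shiftedGaussian (I * (a - b) / 2)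
  have h (w : ℂ) : conj w * w * complexShiftedGaussian a b w
      = (w.re ^ 2 * φ w.re) * ψ w.im + φ w.re * (w.im ^ 2 * ψ w.im) := by
    rw [complexShiftedGaussian_eq, ← normSq_eq_conj_mul_self, normSq_apply]; push_cast; ring
  simp_rw [h]
  rw [integral_add ((integrable_pow_mul_shiftedGaussian 2 _).comp_re_mul_comp_im
      (integrable_shiftedGaussian _))
      ((integrable_shiftedGaussian _).comp_re_mul_comp_im
      (integrable_pow_mul_shiftedGaussian 2 _)),
    integral_comp_re_mul_comp_im (fun x : ℝ => (x : ℂ) ^ 2 * φ x) ψ,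
    integral_comp_re_mul_comp_im φ (fun y : ℝ => (y : ℂ) ^ 2 * ψ y)]
  simp only [φ, ψ, integral_sq_mul_shiftedGaussian, integral_shiftedGaussian]
  linear_combination ((a - b) ^ 2 / 4) * I_sq

lemma integral_ite_conj_mul_ite_mul_complexShiftedGaussian (p q : Prop) [Decidable p]
    [Decidable q] :
    ∫ w, (if p then conj w else 1) * (if q then w else 1) * complexShiftedGaussian a b w
      = (if p then a else 1) * (if q then b else 1) + if p ∧ q then (1 / π : ℂ) else 0 := by
  by_cases hp : p <;> by_cases hq : q <;>
    simp [hp, hq, integral_complexShiftedGaussian, integral_mul_complexShiftedGaussian,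
      integral_conj_mul_complexShiftedGaussian, integral_conj_mul_mul_complexShiftedGaussian]

end ComplexShiftedGaussian

lemma prod_ite_mul_ite_add_ite_and {ι R : Type*} [Fintype ι] [DecidableEq ι]
    [CommSemiring R] (i j : ι) (f g : ι → R) (c : R) :
    ∏ k, ((if k = i then f k else 1) * (if k = j then g k else 1)
        + if k = i ∧ k = j then c else 0)
      = f i * g j + if i = j then c else 0 := by
  by_cases hij : i = j
  · subst hij
    rw [Fintype.prod_eq_single i fun k hk => by simp [hk]]
    simp
  · rw [Fintype.prod_eq_mul i j hij fun k hk => by simp [hk.1, hk.2]]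
    simp [hij, Ne.symm hij]

open ComplexConjugate in
lemma bergK_mul_bergK {n : ℕ} (z w z' : Fin n → ℂ) :
    bergK z w * bergK w z'
      = bergK z z' * ∏ k, complexShiftedGaussian (conj (z' k)) (z k) (w k) := by
  simp only [bergK, complexShiftedGaussian]
  rw [← Complex.exp_sum, ← Complex.exp_add, ← Complex.exp_add, Finset.mul_sum, Finset.mul_sum,
    Finset.mul_sum, ← Finset.sum_add_distrib, ← Finset.sum_add_distrib]
  refine congrArg cexp (Finset.sum_congr rfl fun k _ => ?_)
  simp only [normSq_eq_conj_mul_self]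
  ring

/-- `∫ w̄_i w_j 𝒫(z, w) 𝒫(w, z') dW = ((1/π) δ_{ij} + z̄'_i z_j) 𝒫(z, z')`. -/
theorem bergK_wibar_wj {n : ℕ} (i j : Fin n) (z z' : Fin n → ℂ) :
    (∫ w : Fin n → ℂ, (starRingEnd ℂ) (w i) * w j * bergK z w * bergK w z')
      = ((1 / (Real.pi : ℂ)) * (if i = j then 1 else 0) + (starRingEnd ℂ) (z' i) * z j)
          * bergK z z' := by
  classical
  have hfactor (w : Fin n → ℂ) : (starRingEnd ℂ) (w i) * w j * bergK z w * bergK w z'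
      = bergK z z' * ∏ k, (if k = i then (starRingEnd ℂ) (w k) else 1)
          * (if k = j then w k else 1)
          * complexShiftedGaussian ((starRingEnd ℂ) (z' k)) (z k) (w k) := by
    rw [mul_assoc _ (bergK z w), bergK_mul_bergK, Finset.prod_mul_distrib,
      Finset.prod_mul_distrib, Finset.prod_ite_eq', Finset.prod_ite_eq']
    simp only [Finset.mem_univ, if_true]
    ring
  simp_rw [hfactor]
  rw [integral_const_mul, integral_fintype_prod_volume_eq_prod fun k u =>
    (if k = i then (starRingEnd ℂ) u else 1) * (if k = j then u else 1)
      * complexShiftedGaussian ((starRingEnd ℂ) (z' k)) (z k) u]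
  simp_rw [integral_ite_conj_mul_ite_mul_complexShiftedGaussian]
  rw [prod_ite_mul_ite_add_ite_and]
  split_ifs <;> ring
end
end
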